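/- arXiv:1408.6566 — 4 statements merged into one kernel-verified Lean document; each statement's English description precedes it below -/
import Mathlib

section
/- Let w₂ ∈ ℝ^L satisfy the energy budget P(w₂) ≤ P̂ and maximize the Fisher information subject to the energy budget, i.e. J(w) ≤ J(w₂) for every w ∈ ℝ^L with P(w) ≤ P̂. If moreover J(w₂) > 0, then w₂ solves the information constrained problem with threshold J̌ = J(w₂): for every w ∈ ℝ^L with J(w) ≥ J(w₂) one has P(w₂) ≤ P(w). (First direction of Proposition 2.) -/
/-!
Scaling a vector `w` by `t` multiplies both quadratic forms by `t²` and leaves the cardinality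
cost unchanged. Since `ξ² > 0`, a positive information `J w` then strictly increases when
`t² > 1`, while the energy cost moves continuously with `t`. So if some `w` with
`J w ≥ J w₂` were strictly cheaper than `w₂`, a slight enlargement `t • w`, `t > 1`, would still
fit the budget and beat the maximizer `w₂`.
-/

open Matrix BigOperators

open Filter Topology

section CollaborationVector

variable {ι : Type*} [Fintype ι]

theorem smul_dotProduct_mulVec_smul (M : Matrix ι ι ℝ) (t : ℝ) (w : ι → ℝ) :
    (t • w) ⬝ᵥ M *ᵥ (t • w) = t ^ 2 * (w ⬝ᵥ M *ᵥ w) := by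
  rw [mulVec_smul, smul_dotProduct, dotProduct_smul, smul_eq_mul, smul_eq_mul]
  ring

noncomputable def fisherInformation (ΩJN ΩJD : Matrix ι ι ℝ) (ξsq : ℝ) (w : ι → ℝ) : ℝ :=
  (w ⬝ᵥ ΩJN *ᵥ w) / (w ⬝ᵥ ΩJD *ᵥ w + ξsq)

noncomputable def energyCost (ΩT : Matrix ι ι ℝ) (c : ι → ℝ) (w : ι → ℝ) : ℝ :=
  w ⬝ᵥ ΩT *ᵥ w + ∑ l, if w l = 0 then 0 else c l

theorem fisherInformation_lt_smul {ΩJN ΩJD : Matrix ι ι ℝ} {ξsq : ℝ} {w : ι → ℝ} {t : ℝ}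
    (hJD : ΩJD.PosSemidef) (hξ : 0 < ξsq) (hJ : 0 < fisherInformation ΩJN ΩJD ξsq w)
    (ht : 1 < t ^ 2) :
    fisherInformation ΩJN ΩJD ξsq w < fisherInformation ΩJN ΩJD ξsq (t • w) := by
  have hb : 0 ≤ w ⬝ᵥ ΩJD *ᵥ w := by simpa using hJD.dotProduct_mulVec_nonneg w
  have hden : 0 < w ⬝ᵥ ΩJD *ᵥ w + ξsq := by linarith
  have ha : 0 < w ⬝ᵥ ΩJN *ᵥ w := (div_pos_iff_of_pos_right hden).mp hJ
  unfold fisherInformation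
  rw [smul_dotProduct_mulVec_smul, smul_dotProduct_mulVec_smul,
    div_lt_div_iff₀ hden (by positivity)]
  nlinarith [mul_pos (mul_pos (sub_pos.mpr ht) ha) hξ]

theorem energyCost_smul (ΩT : Matrix ι ι ℝ) (c w : ι → ℝ) {t : ℝ} (ht : t ≠ 0) :
    energyCost ΩT c (t • w) = energyCost ΩT c w + (t ^ 2 - 1) * (w ⬝ᵥ ΩT *ᵥ w) := by
  simp only [energyCost, smul_dotProduct_mulVec_smul, Pi.smul_apply, smul_eq_mul,
    mul_eq_zero, ht, false_or]
  ring

theorem exists_one_lt_energyCost_smul_lt {ΩT : Matrix ι ι ℝ} {c w : ι → ℝ} {Phat : ℝ}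
    (hw : energyCost ΩT c w < Phat) :
    ∃ t : ℝ, 1 < t ∧ energyCost ΩT c (t • w) < Phat := by
  have hcont : Continuous fun t : ℝ ↦ energyCost ΩT c w + (t ^ 2 - 1) * (w ⬝ᵥ ΩT *ᵥ w) := by
    fun_prop
  have hnear : ∀ᶠ t in 𝓝[>] (1 : ℝ),
      energyCost ΩT c w + (t ^ 2 - 1) * (w ⬝ᵥ ΩT *ᵥ w) < Phat :=
    nhdsWithin_le_nhds <| hcont.continuousAt.eventually_lt continuousAt_const (by simpa using hw)
  obtain ⟨t, ht, hPt⟩ := (eventually_mem_nhdsWithin.and hnear).exists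
  exact ⟨t, ht, by rwa [energyCost_smul ΩT c w (zero_lt_one.trans ht).ne']⟩

end CollaborationVector

theorem energy_constrained_solves_information_constrained_general
    {L : ℕ}
    (ΩJN ΩJD ΩT : Matrix (Fin L) (Fin L) ℝ)
    (hJD : ΩJD.PosSemidef)
    (ξsq : ℝ) (hξ : 0 < ξsq)
    (c : Fin L → ℝ)
    (Phat : ℝ)
    (J P : (Fin L → ℝ) → ℝ)
    (hJ : ∀ w, J w = (w ⬝ᵥ ΩJN.mulVec w) / (w ⬝ᵥ ΩJD.mulVec w + ξsq))
    (hP : ∀ w, P w = w ⬝ᵥ ΩT.mulVec w + ∑ l, if w l = 0 then 0 else c l)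
    (w₂ : Fin L → ℝ)
    (hfeas : P w₂ ≤ Phat)
    (hopt : ∀ w, P w ≤ Phat → J w ≤ J w₂)
    (hJpos : 0 < J w₂) :
    ∀ w, J w₂ ≤ J w → P w₂ ≤ P w := by
  obtain rfl : J = fisherInformation ΩJN ΩJD ξsq := funext hJ
  obtain rfl : P = energyCost ΩT c := funext hP
  intro w hw
  by_contra! hlt
  obtain ⟨t, ht, hPt⟩ := exists_one_lt_energyCost_smul_lt (hlt.trans_le hfeas)
  have hJt := fisherInformation_lt_smul hJD hξ (hJpos.trans_le hw) (one_lt_pow₀ ht two_ne_zero)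
  exact (hw.trans_lt hJt).not_ge (hopt _ hPt.le)

/-- first direction of Proposition 2: a maximizer of the Fisher
information subject to the energy budget solves the information constrained
problem with threshold `J w₂`. -/
theorem energy_constrained_solves_information_constrained
    {L : ℕ} (hL : 0 < L)
    (ΩJN ΩJD ΩT : Matrix (Fin L) (Fin L) ℝ)
    (hJN : ΩJN.PosSemidef) (hJD : ΩJD.PosSemidef) (hT : ΩT.PosSemidef)
    (ξsq : ℝ) (hξ : 0 < ξsq)
    (c : Fin L → ℝ) (hc : ∀ l, 0 ≤ c l)
    (Phat : ℝ)
    (J P : (Fin L → ℝ) → ℝ)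
    (hJ : ∀ w, J w = (w ⬝ᵥ ΩJN.mulVec w) / (w ⬝ᵥ ΩJD.mulVec w + ξsq))
    (hP : ∀ w, P w = w ⬝ᵥ ΩT.mulVec w + ∑ l, if w l = 0 then 0 else c l)
    (w₂ : Fin L → ℝ)
    (hfeas : P w₂ ≤ Phat)
    (hopt : ∀ w, P w ≤ Phat → J w ≤ J w₂)
    (hJpos : 0 < J w₂) :
    ∀ w, J w₂ ≤ J w → P w₂ ≤ P w :=
  energy_constrained_solves_information_constrained_general ΩJN ΩJD ΩT hJD ξsq hξ c Phat J P hJ hP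
    w₂ hfeas hopt hJpos
end

section
/- Let λ_1, …, λ_L and g_1, …, g_L be real numbers with λ_1 < 0, λ_l > 0 for all l ≥ 2, and g_1 ≠ 0. Define f(μ) = Σ_{l=1}^L λ_l g_l² / (μ λ_l + 1)² + 1, and suppose f(0) = Σ_{l=1}^L λ_l g_l² + 1 > 0. Then there exists exactly one μ in the open interval (0, −1/λ_1) with f(μ) = 0. (Existence-uniqueness part of Lemma 3.) -/
open BigOperators

set_option maxHeartbeats 1000000 in
/-- existence-uniqueness part of Lemma 3: if
`f(0) = Σ_l λ_l g_l² + 1 > 0`, then `f(μ) = Σ_l λ_l g_l²/(μ λ_l + 1)² + 1`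
has exactly one root in the open interval `(0, −1/λ_1)`. -/
theorem lemma3_unique_root
    {L : ℕ} (hL : 0 < L)
    (lam g : Fin L → ℝ)
    (h1 : lam ⟨0, hL⟩ < 0)
    (hpos : ∀ l : Fin L, l ≠ ⟨0, hL⟩ → 0 < lam l)
    (hg1 : g ⟨0, hL⟩ ≠ 0)
    (f : ℝ → ℝ)
    (hf : ∀ μ : ℝ, f μ = (∑ l, lam l * g l ^ 2 / (μ * lam l + 1) ^ 2) + 1)
    (hf0 : (∑ l, lam l * g l ^ 2) + 1 > 0) :
    ∃! μ : ℝ, (0 < μ ∧ μ < -1 / lam ⟨0, hL⟩) ∧ f μ = 0 := by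
  set i0 : Fin L := ⟨0, hL⟩ with hi0
  set b : ℝ := -1 / lam i0 with hbdef
  have hlamne : lam i0 ≠ 0 := ne_of_lt h1
  have hb : 0 < b := by
    rw [hbdef, div_pos_iff]; right; constructor <;> linarith
  have hblam : b * lam i0 = -1 := by
    rw [hbdef]; field_simp
  -- denominators are positive on [0, b)
  have hden : ∀ μ : ℝ, 0 ≤ μ → μ < b → ∀ l : Fin L, 0 < μ * lam l + 1 := by
    intro μ h0 hμb l
    by_cases hl : l = i0
    · subst hl
      have h2 : b * lam i0 < μ * lam i0 := mul_lt_mul_of_neg_right hμb h1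
      linarith [hblam ▸ h2]
    · have := hpos l hl
      nlinarith
  have hg1sq : 0 < g i0 ^ 2 := by positivity
  have hc0 : lam i0 * g i0 ^ 2 < 0 := mul_neg_of_neg_of_pos h1 hg1sq
  clear_value b
  -- strict decrease
  have hanti : ∀ μ ν : ℝ, 0 ≤ μ → μ < ν → ν < b → f ν < f μ := by
    intro μ ν h0 hlt hνb
    have h0ν : 0 ≤ ν := le_of_lt (lt_of_le_of_lt h0 hlt)
    have hdμ := hden μ h0 (hlt.trans hνb)
    have hdν := hden ν h0ν hνb
    rw [hf, hf]
    have hsum : (∑ l, lam l * g l ^ 2 / (ν * lam l + 1) ^ 2)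
        < ∑ l, lam l * g l ^ 2 / (μ * lam l + 1) ^ 2 := by
      apply Finset.sum_lt_sum
      · intro l _
        by_cases hl : l = i0
        · subst hl
          have h1μ := hdμ i0; have h1ν := hdν i0
          have hlt2 : ν * lam i0 + 1 < μ * lam i0 + 1 := by nlinarith
          refine le_of_lt ?_
          rw [div_lt_div_iff₀ (by positivity) (by positivity)]
          have hsq : (ν * lam i0 + 1) ^ 2 < (μ * lam i0 + 1) ^ 2 := by
            nlinarith [mul_pos (sub_pos.mpr hlt2) (by linarith : (0:ℝ) < (ν * lam i0 + 1) + (μ * lam i0 + 1))]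
          exact mul_lt_mul_of_neg_left hsq hc0
        · have hlam := hpos l hl
          have h1μ := hdμ l; have h1ν := hdν l
          have hdd : (μ * lam l + 1) ^ 2 ≤ (ν * lam l + 1) ^ 2 := by
            nlinarith [mul_pos (sub_pos.mpr hlt) hlam]
          have hnum : 0 ≤ lam l * g l ^ 2 := mul_nonneg hlam.le (sq_nonneg _)
          exact div_le_div_of_nonneg_left hnum (by positivity) hdd
      · refine ⟨i0, Finset.mem_univ i0, ?_⟩
        have h1μ := hdμ i0; have h1ν := hdν i0
        have hlt2 : ν * lam i0 + 1 < μ * lam i0 + 1 := by nlinarith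
        rw [div_lt_div_iff₀ (by positivity) (by positivity)]
        have hsq : (ν * lam i0 + 1) ^ 2 < (μ * lam i0 + 1) ^ 2 := by
          nlinarith [mul_pos (sub_pos.mpr hlt2) (by linarith : (0:ℝ) < (ν * lam i0 + 1) + (μ * lam i0 + 1))]
        exact mul_lt_mul_of_neg_left hsq hc0
    linarith
  have hf0' : 0 < f 0 := by
    rw [hf]; simpa using hf0
  -- find b' ∈ (0,b) with f b' < 0
  set A : ℝ := -(lam i0 * g i0 ^ 2) with hA
  have hApos : 0 < A := by rw [hA]; linarith
  set C : ℝ := (∑ l ∈ Finset.univ \ {i0}, lam l * g l ^ 2) + 1 with hC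
  set ε : ℝ := min (1/2) (Real.sqrt (A / (|C| + 1))) with hεdef
  have habs : (0:ℝ) < |C| + 1 := by positivity
  have hε0 : 0 < ε := lt_min (by norm_num) (Real.sqrt_pos.mpr (by positivity))
  have hε1 : ε < 1 := lt_of_le_of_lt (min_le_left _ _) (by norm_num)
  have hε2 : ε ^ 2 ≤ A / (|C| + 1) := by
    have h := min_le_right (1/2) (Real.sqrt (A / (|C| + 1)))
    have hsq : Real.sqrt (A / (|C| + 1)) ^ 2 = A / (|C| + 1) :=
      Real.sq_sqrt (by positivity)
    nlinarith [Real.sqrt_nonneg (A / (|C| + 1))]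
  have hεA : |C| + 1 ≤ A / ε ^ 2 := by
    rw [le_div_iff₀ (by positivity)]
    calc (|C| + 1) * ε ^ 2 ≤ (|C| + 1) * (A / (|C| + 1)) := by nlinarith
    _ = A := by field_simp
  clear_value A C ε
  set b' : ℝ := b * (1 - ε) with hb'def
  have hb'0 : 0 < b' := mul_pos hb (by linarith)
  have hb'b : b' < b := by
    have h := mul_pos hb hε0
    calc b' = b - b * ε := by rw [hb'def]; ring
    _ < b := by linarith
  have hb'eq : b' * lam i0 + 1 = ε := by
    rw [hb'def]
    have : b * (1 - ε) * lam i0 = (b * lam i0) * (1 - ε) := by ring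
    rw [this, hblam]; ring
  clear_value b'
  have hdb' := hden b' hb'0.le hb'b
  have hfb' : f b' < 0 := by
    rw [hf]
    have hsplit : (∑ l, lam l * g l ^ 2 / (b' * lam l + 1) ^ 2)
        = (∑ l ∈ Finset.univ \ {i0}, lam l * g l ^ 2 / (b' * lam l + 1) ^ 2)
          + lam i0 * g i0 ^ 2 / (b' * lam i0 + 1) ^ 2 :=
      Finset.sum_eq_sum_sdiff_singleton_add (Finset.mem_univ i0) _
    rw [hsplit, hb'eq]
    have hrest : (∑ l ∈ Finset.univ \ {i0}, lam l * g l ^ 2 / (b' * lam l + 1) ^ 2)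
        ≤ ∑ l ∈ Finset.univ \ {i0}, lam l * g l ^ 2 := by
      apply Finset.sum_le_sum
      intro l hl
      have hlne : l ≠ i0 := by
        simpa [Finset.mem_sdiff] using hl
      have hlam := hpos l hlne
      have hd1 : (1:ℝ) ≤ (b' * lam l + 1) ^ 2 := by
        have hbl : 0 < b' * lam l := mul_pos hb'0 hlam
        nlinarith [hbl, sq_nonneg (b' * lam l)]
      have hnum : 0 ≤ lam l * g l ^ 2 := mul_nonneg hlam.le (sq_nonneg _)
      calc lam l * g l ^ 2 / (b' * lam l + 1) ^ 2
          ≤ lam l * g l ^ 2 / 1 := div_le_div_of_nonneg_left hnum one_pos hd1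
        _ = lam l * g l ^ 2 := by ring
    have hterm : lam i0 * g i0 ^ 2 / ε ^ 2 = -(A / ε ^ 2) := by
      rw [hA]; ring
    have hCle : C ≤ |C| := le_trans (le_abs_self C) (le_refl _)
    have : A / ε ^ 2 ≥ |C| + 1 := hεA
    rw [hterm]
    have hCC : (∑ l ∈ Finset.univ \ {i0}, lam l * g l ^ 2) + 1 = C := hC.symm
    linarith [le_abs_self C]
  -- continuity on [0, b']
  have hcont : ContinuousOn f (Set.Icc 0 b') := by
    have hfe : f = fun μ => (∑ l, lam l * g l ^ 2 / (μ * lam l + 1) ^ 2) + 1 :=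
      funext hf
    rw [hfe]
    apply ContinuousOn.add _ continuousOn_const
    apply continuousOn_finset_sum
    intro l _
    apply ContinuousOn.div continuousOn_const
    · fun_prop
    · intro μ hμ
      have := hden μ hμ.1 (lt_of_le_of_lt hμ.2 hb'b) l
      positivity
  -- IVT
  have hivt : (0:ℝ) ∈ f '' Set.Icc 0 b' := by
    apply intermediate_value_Icc' hb'0.le hcont
    exact ⟨hfb'.le, hf0'.le⟩
  obtain ⟨μ, hμmem, hμroot⟩ := hivt
  have hμpos : 0 < μ := by
    rcases eq_or_lt_of_le hμmem.1 with h | h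
    · exfalso; rw [← h] at hμroot; linarith
    · exact h
  have hμb : μ < b := lt_of_le_of_lt hμmem.2 hb'b
  refine ⟨μ, ⟨⟨hμpos, hμb⟩, hμroot⟩, ?_⟩
  rintro ν ⟨⟨hν0, hνb⟩, hνroot⟩
  rcases lt_trichotomy ν μ with h | h | h
  · have := hanti ν μ hν0.le h hμb
    rw [hμroot, hνroot] at this; linarith
  · exact h
  · have := hanti μ ν hμpos.le h hνb
    rw [hμroot, hνroot] at this; linarith
end

section
/- Let m ≥ 1, f ∈ ℝ^m with f_l ≥ 0 for all l, d ≥ 0, ρ > 0, and b ∈ ℝ^m. Define ν ∈ ℝ^m componentwise by ν_l = sgn(b_l) · max(|b_l| − f_l/ρ, 0), and define v* = 0 if ρ·‖ν‖₂ ≤ d, and v* = (1 − d/(ρ‖ν‖₂)) ν otherwise. Then v* is a global minimizer of φ(v) = Σ_{l=1}^m f_l |v_l| + d ‖v‖₂ + (ρ/2) ‖v − b‖₂²: for every v ∈ ℝ^m, φ(v*) ≤ φ(v). (Proposition 4.) -/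
open BigOperators

/-- The Euclidean (ℓ2) norm on `ℝ^m`. -/
noncomputable def l2norm {m : ℕ} (x : Fin m → ℝ) : ℝ :=
  Real.sqrt (∑ l, x l ^ 2)

/-!
Expanding `ρ/2 ‖v - b‖² = ρ/2 ‖v - ν‖² + (linear in v) + const` splits `φ` into the group part
`d ‖v‖ + ρ/2 ‖v - ν‖²` and a separable remainder `Σ_l (f_l |v_l| - ρ (b_l - ν_l) v_l) + const`.
Soft thresholding gives `|ρ (b_l - ν_l)| ≤ f_l` and `ρ (b_l - ν_l) ν_l = f_l |ν_l|`, so the remainder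
is minimized at every nonnegative multiple of `ν`, and `v*` is one. Since `|‖v‖ - ‖ν‖| ≤ ‖v - ν‖`,
the group part is bounded below by the scalar function `x ↦ d x + ρ/2 (x - ‖ν‖)²` at `x = ‖v‖`,
whose minimum over `x ≥ 0` is attained by `v*`.
-/

noncomputable def softThreshold (κ x : ℝ) : ℝ :=
  Real.sign x * max (|x| - κ) 0

lemma abs_sub_softThreshold_le {κ : ℝ} (hκ : 0 ≤ κ) (x : ℝ) :
    |x - softThreshold κ x| ≤ κ := by
  unfold softThreshold
  rcases lt_trichotomy x 0 with hx | rfl | hx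
  · rw [Real.sign_of_neg hx, abs_of_neg hx]
    rcases le_total (-x - κ) 0 with h | h
    · rw [max_eq_right h, abs_le]; constructor <;> linarith
    · rw [max_eq_left h, abs_le]; constructor <;> linarith
  · simpa using hκ
  · rw [Real.sign_of_pos hx, abs_of_pos hx]
    rcases le_total (x - κ) 0 with h | h
    · rw [max_eq_right h, abs_le]; constructor <;> linarith
    · rw [max_eq_left h, abs_le]; constructor <;> linarith

lemma sub_softThreshold_mul_self (κ x : ℝ) :
    (x - softThreshold κ x) * softThreshold κ x = κ * |softThreshold κ x| := by
  unfold softThreshold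
  rcases lt_trichotomy x 0 with hx | rfl | hx
  · rw [Real.sign_of_neg hx, abs_of_neg hx]
    rcases le_total (-x - κ) 0 with h | h
    · simp [max_eq_right h]
    · rw [max_eq_left h, abs_of_nonpos (by linarith)]; ring
  · simp
  · rw [Real.sign_of_pos hx, abs_of_pos hx]
    rcases le_total (x - κ) 0 with h | h
    · simp [max_eq_right h]
    · rw [max_eq_left h, abs_of_nonneg (by linarith)]; ring

lemma mul_softThreshold_minimizes {κ : ℝ} (hκ : 0 ≤ κ) (x : ℝ) {c : ℝ} (hc : 0 ≤ c) (t : ℝ) :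
    κ * |c * softThreshold κ x| - (x - softThreshold κ x) * (c * softThreshold κ x)
      ≤ κ * |t| - (x - softThreshold κ x) * t := by
  set s := softThreshold κ x
  have hzero : κ * |c * s| - (x - s) * (c * s) = 0 := by
    rw [abs_mul, abs_of_nonneg hc]
    linear_combination (-c) * sub_softThreshold_mul_self κ x
  have hbound : (x - s) * t ≤ κ * |t| :=
    calc (x - s) * t ≤ |x - s| * |t| := by rw [← abs_mul]; exact le_abs_self _
      _ ≤ κ * |t| := mul_le_mul_of_nonneg_right (abs_sub_softThreshold_le hκ x) (abs_nonneg t)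
  linarith

lemma mul_softThreshold_objective_le {f ρ : ℝ} (hf : 0 ≤ f) (hρ : 0 < ρ) (b : ℝ) {c : ℝ}
    (hc : 0 ≤ c) (t : ℝ) :
    f * |c * softThreshold (f / ρ) b| + ρ / 2 * (c * softThreshold (f / ρ) b - b) ^ 2
        - ρ / 2 * (c * softThreshold (f / ρ) b - softThreshold (f / ρ) b) ^ 2
      ≤ f * |t| + ρ / 2 * (t - b) ^ 2 - ρ / 2 * (t - softThreshold (f / ρ) b) ^ 2 := by
  have key := mul_softThreshold_minimizes (div_nonneg hf hρ.le) b hc t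
  have hf' : f = ρ * (f / ρ) := by field_simp
  linear_combination ρ * key + (|c * softThreshold (f / ρ) b| - |t|) * hf'

section GroupShrink

variable {E : Type*} [NormedAddCommGroup E] [NormedSpace ℝ E]

noncomputable def groupShrink (d ρ : ℝ) (ν : E) : E :=
  if ρ * ‖ν‖ ≤ d then 0 else (1 - d / (ρ * ‖ν‖)) • ν

lemma groupShrink_eq_smul {d : ℝ} (hd : 0 ≤ d) (ρ : ℝ) (ν : E) :
    ∃ c : ℝ, 0 ≤ c ∧ groupShrink d ρ ν = c • ν := by
  unfold groupShrink
  split_ifs with h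
  · exact ⟨0, le_rfl, (zero_smul ℝ ν).symm⟩
  · push Not at h
    exact ⟨_, sub_nonneg.2 ((div_le_one (hd.trans_lt h)).2 h.le), rfl⟩

lemma groupShrink_objective_le {d ρ : ℝ} (hd : 0 ≤ d) (hρ : 0 < ρ) (ν v : E) :
    d * ‖groupShrink d ρ ν‖ + ρ / 2 * ‖groupShrink d ρ ν - ν‖ ^ 2
      ≤ d * ‖v‖ + ρ / 2 * ‖v - ν‖ ^ 2 := by
  have hsq : (‖v‖ - ‖ν‖) ^ 2 ≤ ‖v - ν‖ ^ 2 := by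
    rw [← sq_abs]
    exact pow_le_pow_left₀ (abs_nonneg _) (abs_norm_sub_norm_le v ν) 2
  have hv := norm_nonneg v
  unfold groupShrink
  split_ifs with h
  · simp only [norm_zero, zero_sub, norm_neg]
    have : 0 ≤ ρ / 2 * ‖v‖ ^ 2 := by positivity
    linear_combination (ρ / 2) * hsq + mul_nonneg hv (sub_nonneg.2 h) + this
  · push Not at h
    obtain ⟨k, rfl⟩ : ∃ k, d = ρ * k := ⟨d / ρ, by field_simp⟩
    have hN : 0 < ‖ν‖ := pos_of_mul_pos_right (hd.trans_lt h) hρ.le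
    have h1 : ‖(1 - ρ * k / (ρ * ‖ν‖)) • ν‖ = ‖ν‖ - k := by
      rw [norm_smul, Real.norm_of_nonneg (sub_nonneg.2 ((div_le_one (hd.trans_lt h)).2 h.le))]
      field_simp
    have h2 : ‖(1 - ρ * k / (ρ * ‖ν‖)) • ν - ν‖ = k := by
      have hk : 0 ≤ k := nonneg_of_mul_nonneg_right hd hρ
      rw [show (1 - ρ * k / (ρ * ‖ν‖)) • ν - ν = -(ρ * k / (ρ * ‖ν‖)) • ν by module, norm_smul,
        norm_neg, Real.norm_of_nonneg (by positivity)]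
      field_simp
    rw [h1, h2]
    have : 0 ≤ ρ / 2 * (‖v‖ - ‖ν‖ + k) ^ 2 := by positivity
    linear_combination (ρ / 2) * hsq + this

end GroupShrink

lemma l2norm_eq_norm {m : ℕ} (x : Fin m → ℝ) : l2norm x = ‖WithLp.toLp 2 x‖ := by
  simp [l2norm, EuclideanSpace.norm_eq]

lemma sum_sub_sq_eq_norm_sq {m : ℕ} (x y : Fin m → ℝ) :
    ∑ l, (x l - y l) ^ 2 = ‖WithLp.toLp 2 x - WithLp.toLp 2 y‖ ^ 2 := by
  rw [← WithLp.toLp_sub, ← l2norm_eq_norm, l2norm, Real.sq_sqrt (by positivity)]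
  rfl

theorem prop4_prox_minimizer_general
    {m : ℕ}
    (f : Fin m → ℝ) (hf : ∀ l, 0 ≤ f l)
    (d : ℝ) (hd : 0 ≤ d) (ρ : ℝ) (hρ : 0 < ρ)
    (b : Fin m → ℝ)
    (ν : Fin m → ℝ)
    (hν : ∀ l, ν l = Real.sign (b l) * max (|b l| - f l / ρ) 0)
    (vstar : Fin m → ℝ)
    (hvstar : vstar =
      if ρ * l2norm ν ≤ d then 0 else (1 - d / (ρ * l2norm ν)) • ν) :
    ∀ v : Fin m → ℝ,
      (∑ l, f l * |vstar l|) + d * l2norm vstar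
          + (ρ / 2) * (∑ l, (vstar l - b l) ^ 2)
        ≤ (∑ l, f l * |v l|) + d * l2norm v
          + (ρ / 2) * (∑ l, (v l - b l) ^ 2) := by
  intro v
  have hshrink : WithLp.toLp 2 vstar = groupShrink d ρ (WithLp.toLp 2 ν) := by
    rw [hvstar, groupShrink, ← l2norm_eq_norm]
    split_ifs <;> rfl
  obtain ⟨c, hc, hvc⟩ := groupShrink_eq_smul hd ρ (WithLp.toLp 2 ν)
  have hcoord : ∀ l, vstar l = c * ν l := fun l =>
    congrArg (fun x => x l) (hshrink.trans hvc)
  have hsep : ∀ l, f l * |vstar l| + ρ / 2 * (vstar l - b l) ^ 2 - ρ / 2 * (vstar l - ν l) ^ 2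
      ≤ f l * |v l| + ρ / 2 * (v l - b l) ^ 2 - ρ / 2 * (v l - ν l) ^ 2 := fun l => by
    rw [hcoord, hν]
    exact mul_softThreshold_objective_le (hf l) hρ (b l) hc (v l)
  have hblock := groupShrink_objective_le hd hρ (WithLp.toLp 2 ν) (WithLp.toLp 2 v)
  rw [← hshrink, ← sum_sub_sq_eq_norm_sq, ← sum_sub_sq_eq_norm_sq, ← l2norm_eq_norm,
    ← l2norm_eq_norm] at hblock
  have hsum := Finset.sum_le_sum fun l (_ : l ∈ Finset.univ) => hsep l
  simp only [Finset.sum_add_distrib, Finset.sum_sub_distrib, ← Finset.mul_sum] at hsum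
  linarith

/-- Proposition 4: the explicit minimizer of the
weighted-ℓ1 + group-ℓ2 + proximal-quadratic objective
`φ(v) = Σ_l f_l |v_l| + d ‖v‖₂ + (ρ/2) ‖v − b‖₂²`. -/
theorem prop4_prox_minimizer
    {m : ℕ} (hm : 1 ≤ m)
    (f : Fin m → ℝ) (hf : ∀ l, 0 ≤ f l)
    (d : ℝ) (hd : 0 ≤ d) (ρ : ℝ) (hρ : 0 < ρ)
    (b : Fin m → ℝ)
    (ν : Fin m → ℝ)
    (hν : ∀ l, ν l = Real.sign (b l) * max (|b l| - f l / ρ) 0)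
    (vstar : Fin m → ℝ)
    (hvstar : vstar =
      if ρ * l2norm ν ≤ d then 0 else (1 - d / (ρ * l2norm ν)) • ν) :
    ∀ v : Fin m → ℝ,
      (∑ l, f l * |vstar l|) + d * l2norm vstar
          + (ρ / 2) * (∑ l, (vstar l - b l) ^ 2)
        ≤ (∑ l, f l * |v l|) + d * l2norm v
          + (ρ / 2) * (∑ l, (v l - b l) ^ 2) :=
  prop4_prox_minimizer_general f hf d hd ρ hρ b ν hν vstar hvstar
end

section
/- Let Ω_JN be a real symmetric positive semidefinite L×L matrix, Ω_JD a real L×L matrix, ξ², J̌ real numbers, and φ : ℝ^L → ℝ any objective function. Suppose β ∈ ℝ^L satisfies the original constraint J̌ · βᵀ Ω_JD β + J̌ ξ² ≤ βᵀ Ω_JN β, and suppose w* minimizes φ over the linearized feasible set {w : J̌ · wᵀ Ω_JD w + J̌ ξ² ≤ βᵀ Ω_JN β + 2 βᵀ Ω_JN (w − β)}. Then w* also satisfies the original constraint J̌ · w*ᵀ Ω_JD w* + J̌ ξ² ≤ w*ᵀ Ω_JN w*, and φ(w*) ≤ φ(β). (Monotone feasibility of each iteration of the linearization method, Algorithm 3.)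 -/
/-!
The affine function `βᵀΩβ + 2βᵀΩ(w - β)` is the tangent of the convex quadratic form `wᵀΩw`
at `β`, so it underestimates it everywhere and is exact at `β`. Hence the linearized feasible
set lies inside the original one and contains `β`; minimality of `w*` then gives `φ w* ≤ φ β`.
-/

open Matrix

section TangentBound

variable {n : Type*} [Fintype n] {A : Matrix n n ℝ}

theorem Matrix.IsHermitian.dotProduct_mulVec_comm (hA : A.IsHermitian) (u v : n → ℝ) :
    u ⬝ᵥ A *ᵥ v = v ⬝ᵥ A *ᵥ u := by
  rw [dotProduct_mulVec, ← mulVec_transpose, dotProduct_comm, show Aᵀ = A from hA]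

theorem Matrix.IsHermitian.quadForm_eq_tangent_add (hA : A.IsHermitian) (b w : n → ℝ) :
    w ⬝ᵥ A *ᵥ w
      = b ⬝ᵥ A *ᵥ b + 2 * (b ⬝ᵥ A *ᵥ (w - b)) + (w - b) ⬝ᵥ A *ᵥ (w - b) := by
  have hcomm := hA.dotProduct_mulVec_comm b w
  simp only [mulVec_sub, sub_dotProduct, dotProduct_sub]
  linarith

theorem Matrix.PosSemidef.tangent_le_quadForm (hA : A.PosSemidef) (b w : n → ℝ) :
    b ⬝ᵥ A *ᵥ b + 2 * (b ⬝ᵥ A *ᵥ (w - b)) ≤ w ⬝ᵥ A *ᵥ w := by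
  have hnonneg : 0 ≤ (w - b) ⬝ᵥ A *ᵥ (w - b) := by
    simpa using hA.dotProduct_mulVec_nonneg (w - b)
  linarith [hA.1.quadForm_eq_tangent_add b w]

end TangentBound

/-- monotone feasibility of each iteration of the linearization
method, Algorithm 3: if `β` satisfies the original constraint and `w*`
minimizes `φ` over the linearized feasible set, then `w*` satisfies the
original constraint and `φ(w*) ≤ φ(β)`. -/
theorem linearization_monotone_feasibility
    {L : ℕ}
    (ΩJN : Matrix (Fin L) (Fin L) ℝ) (hJN : ΩJN.PosSemidef)
    (ΩJD : Matrix (Fin L) (Fin L) ℝ)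
    (ξsq Jcheck : ℝ)
    (φ : (Fin L → ℝ) → ℝ)
    (β wstar : Fin L → ℝ)
    (hβ : Jcheck * (β ⬝ᵥ ΩJD.mulVec β) + Jcheck * ξsq ≤ β ⬝ᵥ ΩJN.mulVec β)
    (hwfeas : Jcheck * (wstar ⬝ᵥ ΩJD.mulVec wstar) + Jcheck * ξsq
        ≤ β ⬝ᵥ ΩJN.mulVec β + 2 * (β ⬝ᵥ ΩJN.mulVec (wstar - β)))
    (hwopt : ∀ w : Fin L → ℝ,
        Jcheck * (w ⬝ᵥ ΩJD.mulVec w) + Jcheck * ξsq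
            ≤ β ⬝ᵥ ΩJN.mulVec β + 2 * (β ⬝ᵥ ΩJN.mulVec (w - β)) →
          φ wstar ≤ φ w) :
    (Jcheck * (wstar ⬝ᵥ ΩJD.mulVec wstar) + Jcheck * ξsq
        ≤ wstar ⬝ᵥ ΩJN.mulVec wstar) ∧
    φ wstar ≤ φ β := by
  refine ⟨hwfeas.trans (hJN.tangent_le_quadForm β wstar), hwopt β ?_⟩
  simpa using hβ
end
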